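/- arXiv:1407.6166 — 4 statements merged into one kernel-verified Lean document; each statement's English description precedes it below -/
import Mathlib

section
/- Let φ : K^T → W have a majority polymorphism P, i.e., P = (p_i | i ∈ T) with p_i(y,x,x) = p_i(x,y,x) = p_i(x,x,y) = x for all x, y ∈ K and i ∈ T, and max{φ(x),φ(y),φ(z)} ≥ φ(P(x,y,z)) for all labelings x,y,z. Let Q, R, S be pairwise disjoint subsets with Q ∪ R ∪ S = T, and let φ_{QR}, φ_{QS}, φ_{RS} denote the projections of φ onto Q∪R, Q∪S, R∪S respectively. Then for every labeling x̄ = (x_Q, x_R, x_S) ∈ K^T, φ(x̄) = max{φ_{QR}(x_Q, x_R), φ_{QS}(x_Q, x_S), φ_{RS}(x_R, x_S)}. -/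
/-- Projection of `φ : K^T → W` onto `S`, encoded on full labelings. -/
noncomputable def proj {T K W : Type*} [Fintype T] [Fintype K] [DecidableEq T] [DecidableEq K]
    [LinearOrder W] (S : Finset T) (φ : (T → K) → W) (x : T → K) : W :=
  Finset.inf' (Finset.univ.filter (fun y : T → K => ∀ i ∈ S, y i = x i))
    ⟨x, by simp⟩ φ

lemma proj_le {T K W : Type*} [Fintype T] [Fintype K] [DecidableEq T] [DecidableEq K]
    [LinearOrder W] (S : Finset T) (φ : (T → K) → W) (x : T → K) :
    proj S φ x ≤ φ x := by
  apply Finset.inf'_le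
  simp

lemma exists_proj {T K W : Type*} [Fintype T] [Fintype K] [DecidableEq T] [DecidableEq K]
    [LinearOrder W] (S : Finset T) (φ : (T → K) → W) (x : T → K) :
    ∃ y : T → K, (∀ i ∈ S, y i = x i) ∧ φ y = proj S φ x := by
  obtain ⟨y, hy, hval⟩ := Finset.exists_mem_eq_inf'
    (s := Finset.univ.filter (fun y : T → K => ∀ i ∈ S, y i = x i))
    ⟨x, by simp⟩ φ
  exact ⟨y, by simpa using hy, hval.symm⟩

/-- if `φ` has a majority polymorphism and `Q, R, S` partition `T`,
then `φ` equals the maximum of its projections onto `Q ∪ R`, `Q ∪ S` and `R ∪ S`. -/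
theorem decomposition {T K W : Type*} [Fintype T] [Fintype K] [DecidableEq T] [DecidableEq K]
    [Nonempty K] [LinearOrder W] (p : T → K → K → K → K)
    (hmaj : ∀ i : T, ∀ x y : K, p i y x x = x ∧ p i x y x = x ∧ p i x x y = x)
    (φ : (T → K) → W)
    (hinv : ∀ x y z : T → K,
      φ (fun i => p i (x i) (y i) (z i)) ≤ max (max (φ x) (φ y)) (φ z))
    (Q R S : Finset T) (hQR : Disjoint Q R) (hQS : Disjoint Q S) (hRS : Disjoint R S)
    (hunion : Q ∪ R ∪ S = Finset.univ) (x : T → K) :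
    φ x = max (max (proj (Q ∪ R) φ x) (proj (Q ∪ S) φ x)) (proj (R ∪ S) φ x) := by
  apply le_antisymm
  · obtain ⟨a, ha, haval⟩ := exists_proj (Q ∪ R) φ x
    obtain ⟨b, hb, hbval⟩ := exists_proj (Q ∪ S) φ x
    obtain ⟨c, hc, hcval⟩ := exists_proj (R ∪ S) φ x
    have key : (fun i => p i (a i) (b i) (c i)) = x := by
      funext i
      have hi : i ∈ Q ∪ R ∪ S := hunion ▸ Finset.mem_univ i
      rcases Finset.mem_union.1 hi with hi | hiS
      · rcases Finset.mem_union.1 hi with hiQ | hiR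
        · rw [ha i (Finset.mem_union_left _ hiQ), hb i (Finset.mem_union_left _ hiQ)]
          exact (hmaj i (x i) (c i)).2.2
        · rw [ha i (Finset.mem_union_right _ hiR), hc i (Finset.mem_union_left _ hiR)]
          exact (hmaj i (x i) (b i)).2.1
      · rw [hb i (Finset.mem_union_right _ hiS), hc i (Finset.mem_union_right _ hiS)]
        exact (hmaj i (x i) (a i)).1
    calc φ x = φ (fun i => p i (a i) (b i) (c i)) := by rw [key]
      _ ≤ max (max (φ a) (φ b)) (φ c) := hinv a b c
      _ = _ := by rw [haval, hbval, hcval]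
  · exact max_le (max_le (proj_le _ _ _) (proj_le _ _ _)) (proj_le _ _ _)
end

section
/- (Explicit star-to-simplex formula.) Let S be a finite nonempty set, t ∉ S, K finite nonempty, W a linear order, and φ_{tl} : K × K → W for l ∈ S. Define g : K × K^S → W by g(k, x) = max over l ∈ S of φ_{tl}(k, x_l). Then for any i, j ∈ S and any a, b ∈ K, the projection ψ_{ij}(a,b) = min over (k,x) with x_i = a, x_j = b of g(k,x) satisfies: ψ_{ij}(a,b) = min over k ∈ K of max{ φ_{ti}(k,a), φ_{tj}(k,b), max over l ∈ S of (min over c ∈ K of φ_{tl}(k,c)) }. -/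
/-- explicit star-to-simplex formula. For `g(k,x) = max_{l ∈ S} φ_{tl}(k, x_l)`,
the projection `ψ_{ij}(a,b) = min_{(k,x) : x_i = a, x_j = b} g(k,x)` equals
`min_{k} max{φ_{ti}(k,a), φ_{tj}(k,b), max_{l ∈ S} min_{c} φ_{tl}(k,c)}`. -/
theorem star_to_simplex {S K W : Type*} [Fintype S] [Fintype K] [DecidableEq S]
    [DecidableEq K] [Nonempty S] [Nonempty K] [LinearOrder W]
    (φt : S → K → K → W) (i j : S) (hij : i ≠ j) (a b : K) :
    Finset.inf' ((Finset.univ ×ˢ Finset.univ).filter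
        (fun p : K × (S → K) => p.2 i = a ∧ p.2 j = b))
      ⟨(Classical.arbitrary K, fun l => if l = i then a else b),
        by simp [Finset.mem_filter, hij.symm]⟩
      (fun p => Finset.sup' Finset.univ Finset.univ_nonempty
        (fun l : S => φt l p.1 (p.2 l))) =
    Finset.inf' Finset.univ Finset.univ_nonempty (fun k : K =>
      max (max (φt i k a) (φt j k b))
        (Finset.sup' Finset.univ Finset.univ_nonempty (fun l : S =>
          Finset.inf' Finset.univ Finset.univ_nonempty (fun c : K => φt l k c)))) := by
  apply le_antisymm
  · apply Finset.le_inf'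
    intro k _
    -- choose x : for each l, x i = a, x j = b, otherwise argmin
    have hx : ∀ l : S, ∃ c : K, φt l k c =
        Finset.inf' Finset.univ Finset.univ_nonempty (fun c : K => φt l k c) := by
      intro l
      obtain ⟨c, _, hc⟩ := Finset.exists_mem_eq_inf' Finset.univ_nonempty (fun c : K => φt l k c)
      exact ⟨c, hc.symm⟩
    choose m hm using hx
    set x : S → K := fun l => if l = i then a else if l = j then b else m l with hxdef
    have hmem : (k, x) ∈ (Finset.univ ×ˢ Finset.univ).filter
        (fun p : K × (S → K) => p.2 i = a ∧ p.2 j = b) := by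
      simp [x, hij.symm]
    refine le_trans (Finset.inf'_le _ hmem) ?_
    apply Finset.sup'_le
    intro l _
    by_cases hli : l = i
    · subst hli
      simp [x]
    · by_cases hlj : l = j
      · subst hlj
        simp [x, hli]
      · have h2 : (k, x).2 l = m l := by simp [x, hli, hlj]
        rw [h2, hm l]
        refine le_trans ?_ (le_max_right _ _)
        exact Finset.le_sup' (fun l : S => Finset.univ.inf' Finset.univ_nonempty
          (fun c : K => φt l k c)) (Finset.mem_univ l)
  · apply Finset.le_inf'
    intro p hp
    simp only [Finset.mem_filter] at hp
    obtain ⟨-, hpi, hpj⟩ := hp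
    refine le_trans (Finset.inf'_le _ (Finset.mem_univ p.1)) ?_
    apply max_le
    · apply max_le
      · rw [← hpi]; exact Finset.le_sup' (fun l : S => φt l p.1 (p.2 l)) (Finset.mem_univ i)
      · rw [← hpj]; exact Finset.le_sup' (fun l : S => φt l p.1 (p.2 l)) (Finset.mem_univ j)
    · apply Finset.sup'_le
      intro l _
      refine le_trans (Finset.inf'_le _ (Finset.mem_univ (p.2 l))) ?_
      exact Finset.le_sup' (fun l : S => φt l p.1 (p.2 l)) (Finset.mem_univ l)
end

section
/- (Order reduction.) Let Φ be a problem given by a structure 𝒮 ⊆ 2^T and functions φ_S : K^S → W for S ∈ 𝒮, and suppose each φ_S is invariant under a common majority operator P = (p_i | i ∈ T). Define ψ_{ij} : K × K → W by ψ_{ij} = max over S ∈ 𝒮 of φ^S_{ij}, where φ^S_{ij} is the projection of φ_S onto {i,j} if {i,j} ⊆ S and the bottom element of W otherwise. Then for all x̄ ∈ K^T: max over S ∈ 𝒮 of φ_S(x_S) = max over i,j ∈ T of ψ_{ij}(x_i, x_j), and each ψ_{ij} is invariant under P. -/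
/-- Projection of `φ : K^T → W` onto the pair `{i,j}`: minimize `φ` over all
labelings taking value `a` at `i` and `b` at `j` (bottom if no such labeling). -/
noncomputable def projPair {T K W : Type*} [Fintype T] [Fintype K] [DecidableEq T]
    [DecidableEq K] [LinearOrder W] [OrderBot W] (φ : (T → K) → W) (i j : T) (a b : K) : W :=
  if h : (Finset.univ.filter (fun y : T → K => y i = a ∧ y j = b)).Nonempty
  then Finset.inf' _ h φ else ⊥

/-- `ψ_{ij} = max_{S ∈ 𝒮} φ^S_{ij}`, where `φ^S_{ij}` is the projection of `φ_S`
onto `{i,j}` if `{i,j} ⊆ S`, and the bottom element of `W` otherwise. -/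
noncomputable def psiRed {T K W : Type*} [Fintype T] [Fintype K] [DecidableEq T]
    [DecidableEq K] [LinearOrder W] [OrderBot W] (𝒮 : Finset (Finset T))
    (φ : Finset T → (T → K) → W) (i j : T) (a b : K) : W :=
  𝒮.sup (fun S => if i ∈ S ∧ j ∈ S then projPair (φ S) i j a b else ⊥)

lemma projPair_le_apply {T K W : Type*} [Fintype T] [Fintype K] [DecidableEq T]
    [DecidableEq K] [LinearOrder W] [OrderBot W] (φ : (T → K) → W) (i j : T)
    (y : T → K) : projPair φ i j (y i) (y j) ≤ φ y := by
  have hy : y ∈ Finset.univ.filter (fun z : T → K => z i = y i ∧ z j = y j) := by simp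
  rw [projPair, dif_pos ⟨y, hy⟩]
  exact Finset.inf'_le _ hy

lemma projPair_exists {T K W : Type*} [Fintype T] [Fintype K] [DecidableEq T]
    [DecidableEq K] [LinearOrder W] [OrderBot W] (φ : (T → K) → W) (i j : T) (a b : K)
    (h : (Finset.univ.filter (fun z : T → K => z i = a ∧ z j = b)).Nonempty) :
    ∃ y : T → K, y i = a ∧ y j = b ∧ φ y = projPair φ i j a b := by
  rw [projPair, dif_pos h]
  obtain ⟨y, hy, hval⟩ := Finset.exists_mem_eq_inf' h φ
  simp only [Finset.mem_filter, Finset.mem_univ, true_and] at hy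
  exact ⟨y, hy.1, hy.2, hval.symm⟩

/-- order reduction: for a problem with structure `𝒮` whose
functions `φ_S` (each depending only on the coordinates in `S`) are invariant
under a common majority operator `P = (p_i)`, the second order functions
`ψ_{ij}` satisfy `max_{S ∈ 𝒮} φ_S(x_S) = max_{i,j ∈ T} ψ_{ij}(x_i, x_j)`
and each `ψ_{ij}` is invariant under `P`. -/
theorem order_reduction {T K W : Type*} [Fintype T] [Fintype K] [DecidableEq T]
    [DecidableEq K] [Nonempty T] [Nonempty K] [LinearOrder W] [OrderBot W]
    (𝒮 : Finset (Finset T)) (h𝒮 : 𝒮.Nonempty) (hord : ∀ S ∈ 𝒮, 2 ≤ S.card)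
    (φ : Finset T → (T → K) → W)
    (hdep : ∀ S ∈ 𝒮, ∀ x y : T → K, (∀ i ∈ S, x i = y i) → φ S x = φ S y)
    (p : T → K → K → K → K)
    (hmaj : ∀ i : T, ∀ x y : K, p i y x x = x ∧ p i x y x = x ∧ p i x x y = x)
    (hinv : ∀ S ∈ 𝒮, ∀ x y z : T → K,
      φ S (fun i => p i (x i) (y i) (z i)) ≤ max (max (φ S x) (φ S y)) (φ S z)) :
    (∀ xb : T → K,
      𝒮.sup (fun S => φ S xb) =
        (Finset.univ ×ˢ Finset.univ).sup
          (fun ij : T × T => psiRed 𝒮 φ ij.1 ij.2 (xb ij.1) (xb ij.2))) ∧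
    (∀ i j : T, i ≠ j → ∀ x y z : K × K,
      psiRed 𝒮 φ i j (p i x.1 y.1 z.1) (p j x.2 y.2 z.2) ≤
        max (max (psiRed 𝒮 φ i j x.1 x.2) (psiRed 𝒮 φ i j y.1 y.2))
          (psiRed 𝒮 φ i j z.1 z.2)) := by
  constructor
  · intro xb
    set R := (Finset.univ ×ˢ Finset.univ).sup
        (fun ij : T × T => psiRed 𝒮 φ ij.1 ij.2 (xb ij.1) (xb ij.2)) with hR
    apply le_antisymm
    · -- hard direction: each φ S xb ≤ R
      apply Finset.sup_le
      intro S hS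
      -- pair witnesses
      have pairwit : ∀ i ∈ S, ∀ j ∈ S,
          ∃ y : T → K, y i = xb i ∧ y j = xb j ∧ φ S y ≤ R := by
        intro i hi j hj
        have hne : (Finset.univ.filter
            (fun z : T → K => z i = xb i ∧ z j = xb j)).Nonempty := ⟨xb, by simp⟩
        obtain ⟨y, hyi, hyj, hyv⟩ := projPair_exists (φ S) i j (xb i) (xb j) hne
        refine ⟨y, hyi, hyj, ?_⟩
        rw [hyv]
        have h1 : projPair (φ S) i j (xb i) (xb j) ≤ psiRed 𝒮 φ i j (xb i) (xb j) := by
          have h0 : (if i ∈ S ∧ j ∈ S then projPair (φ S) i j (xb i) (xb j) else ⊥) ≤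
              psiRed 𝒮 φ i j (xb i) (xb j) :=
            Finset.le_sup (f := fun S' =>
              if i ∈ S' ∧ j ∈ S' then projPair (φ S') i j (xb i) (xb j) else ⊥) hS
          rwa [if_pos ⟨hi, hj⟩] at h0
        refine h1.trans ?_
        have hmem : (i, j) ∈ (Finset.univ ×ˢ Finset.univ : Finset (T × T)) := by simp
        exact Finset.le_sup (f := fun ij : T × T =>
          psiRed 𝒮 φ ij.1 ij.2 (xb ij.1) (xb ij.2)) hmem
      have hSne : S.Nonempty := Finset.card_pos.mp (by have := hord S hS; omega)
      have key : ∀ A : Finset T, A ⊆ S →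
          ∃ y : T → K, (∀ t ∈ A, y t = xb t) ∧ φ S y ≤ R := by
        intro A
        induction A using Finset.strongInduction with
        | _ A ih =>
          intro hAS
          by_cases h2 : A.card ≤ 2
          · -- small case
            by_cases hA : A.Nonempty
            · obtain ⟨i, hi⟩ := hA
              by_cases hA2 : (A.erase i).Nonempty
              · obtain ⟨j, hj⟩ := hA2
                have hjA : j ∈ A := Finset.mem_of_mem_erase hj
                obtain ⟨y, hyi, hyj, hyR⟩ := pairwit i (hAS hi) j (hAS hjA)
                refine ⟨y, ?_, hyR⟩
                intro t ht
                by_cases hti : t = i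
                · rw [hti]; exact hyi
                · have htj : t = j := by
                    have h1 : (A.erase i).card ≤ 1 := by
                      have := Finset.card_erase_of_mem hi; omega
                    exact Finset.card_le_one.mp h1 t
                      (Finset.mem_erase.mpr ⟨hti, ht⟩) j hj
                  rw [htj]; exact hyj
              · -- A = {i}
                obtain ⟨y, hyi, _, hyR⟩ := pairwit i (hAS hi) i (hAS hi)
                refine ⟨y, ?_, hyR⟩
                intro t ht
                have : t = i := by
                  by_contra hne
                  exact hA2 ⟨t, Finset.mem_erase.mpr ⟨hne, ht⟩⟩
                rw [this]; exact hyi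
            · -- A empty
              obtain ⟨i, hi⟩ := hSne
              obtain ⟨y, _, _, hyR⟩ := pairwit i hi i hi
              refine ⟨y, ?_, hyR⟩
              intro t ht
              exact absurd ⟨t, ht⟩ hA
          · -- |A| ≥ 3
            push_neg at h2
            obtain ⟨a, ha⟩ : A.Nonempty := Finset.card_pos.mp (by omega)
            obtain ⟨b, hb⟩ : (A.erase a).Nonempty := by
              apply Finset.card_pos.mp
              rw [Finset.card_erase_of_mem ha]; omega
            obtain ⟨c, hc⟩ : ((A.erase a).erase b).Nonempty := by
              apply Finset.card_pos.mp
              rw [Finset.card_erase_of_mem hb, Finset.card_erase_of_mem ha]; omega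
            have hba : b ≠ a := (Finset.mem_erase.mp hb).1
            have hbA : b ∈ A := (Finset.mem_erase.mp hb).2
            have hcb : c ≠ b := (Finset.mem_erase.mp hc).1
            have hca : c ≠ a := (Finset.mem_erase.mp (Finset.mem_of_mem_erase hc)).1
            have hcA : c ∈ A := Finset.mem_of_mem_erase (Finset.mem_of_mem_erase hc)
            obtain ⟨u, hu, huR⟩ := ih (A.erase a) (Finset.erase_ssubset ha)
              ((Finset.erase_subset _ _).trans hAS)
            obtain ⟨v, hv, hvR⟩ := ih (A.erase b) (Finset.erase_ssubset hbA)
              ((Finset.erase_subset _ _).trans hAS)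
            obtain ⟨w, hw, hwR⟩ := ih (A.erase c) (Finset.erase_ssubset hcA)
              ((Finset.erase_subset _ _).trans hAS)
            refine ⟨fun t => p t (u t) (v t) (w t), ?_, ?_⟩
            · intro t ht
              show p t (u t) (v t) (w t) = xb t
              by_cases hta : t = a
              · have htb : t ≠ b := by rw [hta]; exact Ne.symm hba
                have htc : t ≠ c := by rw [hta]; exact Ne.symm hca
                have hvt : v t = xb t := hv t (Finset.mem_erase.mpr ⟨htb, ht⟩)
                have hwt : w t = xb t := hw t (Finset.mem_erase.mpr ⟨htc, ht⟩)
                rw [hvt, hwt]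
                exact (hmaj t (xb t) (u t)).1
              · have hut : u t = xb t := hu t (Finset.mem_erase.mpr ⟨hta, ht⟩)
                by_cases htb : t = b
                · have htc : t ≠ c := by rw [htb]; exact Ne.symm hcb
                  have hwt : w t = xb t := hw t (Finset.mem_erase.mpr ⟨htc, ht⟩)
                  rw [hut, hwt]
                  exact (hmaj t (xb t) (v t)).2.1
                · have hvt : v t = xb t := hv t (Finset.mem_erase.mpr ⟨htb, ht⟩)
                  rw [hut, hvt]
                  exact (hmaj t (xb t) (w t)).2.2
            · exact (hinv S hS u v w).trans (max_le (max_le huR hvR) hwR)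
      obtain ⟨y, hy, hyR⟩ := key S (le_refl S)
      have : φ S xb = φ S y := hdep S hS xb y (fun t ht => (hy t ht).symm)
      rw [this]; exact hyR
    · -- easy direction
      apply Finset.sup_le
      intro ij _
      apply Finset.sup_le
      intro S hS
      by_cases h : ij.1 ∈ S ∧ ij.2 ∈ S
      · rw [if_pos h]
        exact (projPair_le_apply (φ S) ij.1 ij.2 xb).trans
          (Finset.le_sup (f := fun S' => φ S' xb) hS)
      · rw [if_neg h]; exact bot_le
  · -- invariance of psiRed
    intro i j hij x y z
    apply Finset.sup_le
    intro S hS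
    by_cases hijS : i ∈ S ∧ j ∈ S
    · rw [if_pos hijS]
      have hne : ∀ a b : K, (Finset.univ.filter
          (fun t : T → K => t i = a ∧ t j = b)).Nonempty := by
        intro a b
        refine ⟨fun t => if t = j then b else a, ?_⟩
        simp [hij]
      obtain ⟨u, hui, huj, hu⟩ := projPair_exists (φ S) i j x.1 x.2 (hne _ _)
      obtain ⟨v, hvi, hvj, hv⟩ := projPair_exists (φ S) i j y.1 y.2 (hne _ _)
      obtain ⟨w, hwi, hwj, hw⟩ := projPair_exists (φ S) i j z.1 z.2 (hne _ _)
      have hm : projPair (φ S) i j (p i x.1 y.1 z.1) (p j x.2 y.2 z.2) ≤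
          φ S (fun t => p t (u t) (v t) (w t)) := by
        have h0 := projPair_le_apply (φ S) i j (fun t => p t (u t) (v t) (w t))
        simpa [hui, huj, hvi, hvj, hwi, hwj] using h0
      refine hm.trans ((hinv S hS u v w).trans ?_)
      have hx : φ S u ≤ psiRed 𝒮 φ i j x.1 x.2 := by
        rw [hu]
        have h0 : (if i ∈ S ∧ j ∈ S then projPair (φ S) i j x.1 x.2 else ⊥) ≤
            psiRed 𝒮 φ i j x.1 x.2 :=
          Finset.le_sup (f := fun S' =>
            if i ∈ S' ∧ j ∈ S' then projPair (φ S') i j x.1 x.2 else ⊥) hS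
        rwa [if_pos hijS] at h0
      have hy' : φ S v ≤ psiRed 𝒮 φ i j y.1 y.2 := by
        rw [hv]
        have h0 : (if i ∈ S ∧ j ∈ S then projPair (φ S) i j y.1 y.2 else ⊥) ≤
            psiRed 𝒮 φ i j y.1 y.2 :=
          Finset.le_sup (f := fun S' =>
            if i ∈ S' ∧ j ∈ S' then projPair (φ S') i j y.1 y.2 else ⊥) hS
        rwa [if_pos hijS] at h0
      have hz : φ S w ≤ psiRed 𝒮 φ i j z.1 z.2 := by
        rw [hw]
        have h0 : (if i ∈ S ∧ j ∈ S then projPair (φ S) i j z.1 z.2 else ⊥) ≤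
            psiRed 𝒮 φ i j z.1 z.2 :=
          Finset.le_sup (f := fun S' =>
            if i ∈ S' ∧ j ∈ S' then projPair (φ S') i j z.1 z.2 else ⊥) hS
        rwa [if_pos hijS] at h0
      exact max_le (max_le (hx.trans (le_max_of_le_left (le_max_left _ _)))
        (hy'.trans (le_max_of_le_left (le_max_right _ _)))) (hz.trans (le_max_right _ _))
    · rw [if_neg hijS]; exact bot_le
end

section
/- (Monotonicity of d-best values under restriction to a dominating subset.) Let A be a finite set, g : A → W into a linear order, B ⊆ A, and suppose Sol_B ⊆ B is a set of d best elements of B for g and Sol_A ⊆ A is a set of d best elements of A for g (d ≤ |B|). If every element a ∈ A ∖ B satisfies g(a) ≥ max over b ∈ Sol_B of g(b), then max over Sol_B of g = max over Sol_A of g, and Sol_B is also a set of d best elements of A. -/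
/-- monotonicity of `d`-best values under restriction to a
dominating subset. -/
theorem d_best_restriction {α W : Type*} [DecidableEq α] [LinearOrder W]
    (A B : Finset α) (hBA : B ⊆ A) (g : α → W) (d : ℕ) (hd : 1 ≤ d) (hdB : d ≤ B.card)
    (SolB : Finset α) (hSolB : SolB ⊆ B) (hSolBcard : SolB.card = d)
    (hSolBbest : ∀ x ∈ SolB, ∀ y ∈ B, y ∉ SolB → g x ≤ g y)
    (SolA : Finset α) (hSolA : SolA ⊆ A) (hSolAcard : SolA.card = d)
    (hSolAbest : ∀ x ∈ SolA, ∀ y ∈ A, y ∉ SolA → g x ≤ g y)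
    (hdom : ∀ a ∈ A, a ∉ B →
      Finset.sup' SolB (Finset.card_pos.mp (hSolBcard ▸ hd)) g ≤ g a) :
    Finset.sup' SolB (Finset.card_pos.mp (hSolBcard ▸ hd)) g =
      Finset.sup' SolA (Finset.card_pos.mp (hSolAcard ▸ hd)) g ∧
    (∀ x ∈ SolB, ∀ y ∈ A, y ∉ SolB → g x ≤ g y) := by
  have hB : SolB.Nonempty := Finset.card_pos.mp (hSolBcard ▸ hd)
  have hA : SolA.Nonempty := Finset.card_pos.mp (hSolAcard ▸ hd)
  have hbest : ∀ x ∈ SolB, ∀ y ∈ A, y ∉ SolB → g x ≤ g y := by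
    intro x hx y hyA hyB
    by_cases hy : y ∈ B
    · exact hSolBbest x hx y hy hyB
    · exact le_trans (Finset.le_sup' g hx) (hdom y hyA hy)
  refine ⟨le_antisymm ?_ ?_, hbest⟩
  · -- sup SolB ≤ sup SolA
    by_cases hsub : SolA ⊆ SolB
    · have heq : SolA = SolB := Finset.eq_of_subset_of_card_le hsub
        (by rw [hSolBcard, hSolAcard])
      exact Finset.sup'_le _ _ fun x hx => Finset.le_sup' g (heq ▸ hx)
    · obtain ⟨y, hyA, hyB⟩ := Finset.not_subset.mp hsub
      calc Finset.sup' SolB hB g ≤ g y :=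
            Finset.sup'_le _ _ (fun x hx => hbest x hx y (hSolA hyA) hyB)
        _ ≤ Finset.sup' SolA hA g := Finset.le_sup' g hyA
  · -- sup SolA ≤ sup SolB
    by_cases hsub : SolB ⊆ SolA
    · have heq : SolB = SolA := Finset.eq_of_subset_of_card_le hsub
        (by rw [hSolBcard, hSolAcard])
      exact Finset.sup'_le _ _ fun x hx => Finset.le_sup' g (heq ▸ hx)
    · obtain ⟨y, hyB, hyA⟩ := Finset.not_subset.mp hsub
      calc Finset.sup' SolA hA g ≤ g y :=
            Finset.sup'_le _ _ (fun x hx => hSolAbest x hx y (hBA (hSolB hyB)) hyA)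
        _ ≤ Finset.sup' SolB hB g := Finset.le_sup' g hyB
end
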